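/- Let X be a dendroid such that X \ E(X) = ⋃ₙ αₙ is a countable union of arcs. Then there exists a countable set Q ⊂ X intersecting every arc of X; hence X is Suslinian. -/

import Mathlib

open Set Filter Topology

/-- The Euclidean plane. -/
abbrev Plane := EuclideanSpace ℝ (Fin 2)

section Defs

variable {α : Type*} [TopologicalSpace α]

/-- `A` is an arc with endpoints `a` and `b`: a homeomorphic image of `[0,1]`
sending `0 ↦ a` and `1 ↦ b`. -/
def IsArcWithEndpoints (A : Set α) (a b : α) : Prop :=
  ∃ f : ℝ → α, ContinuousOn f (Set.Icc 0 1) ∧ Set.InjOn f (Set.Icc 0 1) ∧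
    f '' (Set.Icc 0 1) = A ∧ f 0 = a ∧ f 1 = b

/-- `A` is an arc. -/
def IsArc (A : Set α) : Prop := ∃ a b, IsArcWithEndpoints A a b

/-- Every two distinct points of `X` are joined by an arc inside `X`. -/
def ArcwiseConnected (X : Set α) : Prop :=
  ∀ x ∈ X, ∀ y ∈ X, x ≠ y → ∃ A, A ⊆ X ∧ IsArcWithEndpoints A x y

/-- Every two subcontinua of `X` have connected intersection. -/
def HereditarilyUnicoherent (X : Set α) : Prop :=
  ∀ K L : Set α, K ⊆ X → L ⊆ X → IsCompact K → IsConnected K →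
    IsCompact L → IsConnected L → IsPreconnected (K ∩ L)

/-- A dendroid: a hereditarily unicoherent, arcwise connected continuum. -/
def IsDendroid (X : Set α) : Prop :=
  IsCompact X ∧ IsConnected X ∧ HereditarilyUnicoherent X ∧ ArcwiseConnected X

/-- The set of endpoints of `X`: points that are endpoints of every arc in `X`
containing them. -/
def Endpoints (X : Set α) : Set α :=
  {e | e ∈ X ∧ ∀ A : Set α, A ⊆ X → IsArc A → e ∈ A → ∃ b, IsArcWithEndpoints A e b}

/-- `X` is Suslinian: every collection of pairwise-disjoint non-degenerate
subcontinua of `X` is countable. -/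
def IsSuslinian (X : Set α) : Prop :=
  ∀ S : Set (Set α), (∀ K ∈ S, K ⊆ X ∧ IsCompact K ∧ IsConnected K ∧ K.Nontrivial) →
    S.PairwiseDisjoint id → S.Countable

/-- The arc component of `x` inside the set `S`. -/
def arcComponentIn (S : Set α) (x : α) : Set α :=
  {y | y ∈ S ∧ (y = x ∨ ∃ A, A ⊆ S ∧ IsArcWithEndpoints A x y)}

/-- The collection of arc components of `X \ {x}`; its cardinality is the order of `x`. -/
def orderComponents (X : Set α) (x : α) : Set (Set α) :=
  {C | ∃ y ∈ X \ {x}, C = arcComponentIn (X \ {x}) y}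

/-- Ramification points of `X`: points of order at least 3. -/
def RamificationPoints (X : Set α) : Set α :=
  {x | x ∈ X ∧ 3 ≤ (orderComponents X x).encard}

/-- `A` is a clopen subset of the subspace `Y`. -/
def IsClopenIn (Y A : Set α) : Prop :=
  A ⊆ Y ∧ (∃ U, IsOpen U ∧ A = Y ∩ U) ∧ (∃ C, IsClosed C ∧ A = Y ∩ C)

/-- The quasicomponent of `x` in the subspace `Y`: the intersection of all
clopen subsets of `Y` containing `x`. -/
def quasicomponentIn (Y : Set α) (x : α) : Set α :=
  {y ∈ Y | ∀ A : Set α, IsClopenIn Y A → x ∈ A → y ∈ A}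

/-- `Y` is hereditarily disconnected: it contains no non-degenerate connected subset. -/
def HereditarilyDisconnected (Y : Set α) : Prop :=
  ∀ S : Set α, S ⊆ Y → IsPreconnected S → S.Subsingleton

end Defs

/-- The point `x` of `X` is (arcwise) accessible from `ℝ² \ X`. -/
def AccessiblePoint (X : Set Plane) (x : Plane) : Prop :=
  ∃ A : Set Plane, IsArc A ∧ A ∩ X = {x}

/-- `σ` separates the points `b` and `d` in the plane: no connected subset of the
complement of `σ` contains both. -/
def SeparatesPoints (σ : Set Plane) (b d : Plane) : Prop :=
  b ∉ σ ∧ d ∉ σ ∧ ∀ K : Set Plane, K ⊆ σᶜ → IsPreconnected K → b ∈ K → d ∉ K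

/-- A simple closed curve in the plane: the image of a period-1 parametrization
injective on `[0,1)`. -/
def IsSimpleClosedCurve (O : Set Plane) : Prop :=
  ∃ f : ℝ → Plane, Continuous f ∧ Function.Periodic f 1 ∧
    Set.InjOn f (Set.Ico 0 1) ∧ f '' (Set.Ico 0 1) = O

/-- The dendroid `X` is smooth at `p`: there is a choice `arcTo x` of the unique arc
from `x` to `p` (reduced to `{p}` for `x = p`) such that `xₙ → x` in `X` implies
`arcTo xₙ → arcTo x` in the Hausdorff distance. -/
def DendroidSmoothAt (X : Set Plane) (p : Plane) : Prop :=
  p ∈ X ∧ ∃ arcTo : Plane → Set Plane,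
    arcTo p = {p} ∧
    (∀ x ∈ X, x ≠ p → arcTo x ⊆ X ∧ IsArcWithEndpoints (arcTo x) x p) ∧
    (∀ (xs : ℕ → Plane) (x : Plane), (∀ n, xs n ∈ X) → x ∈ X →
      Filter.Tendsto xs Filter.atTop (nhds x) →
      Filter.Tendsto (fun n => EMetric.hausdorffEdist (arcTo (xs n)) (arcTo x))
        Filter.atTop (nhds 0))

/-- A space is zero-dimensional if it has a basis of clopen sets. -/
def IsZeroDimensionalSpace (β : Type*) [TopologicalSpace β] : Prop :=
  ∀ (x : β) (U : Set β), IsOpen U → x ∈ U → ∃ V : Set β, IsClopen V ∧ x ∈ V ∧ V ⊆ U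

/-- A space is almost zero-dimensional if it has a neighborhood basis of sets
which are intersections of clopen sets. -/
def IsAlmostZeroDimensionalSpace (β : Type*) [TopologicalSpace β] : Prop :=
  ∀ (x : β) (U : Set β), IsOpen U → x ∈ U →
    ∃ V : Set β, V ∈ nhds x ∧ V ⊆ U ∧
      ∃ 𝒞 : Set (Set β), (∀ C ∈ 𝒞, IsClopen C) ∧ V = ⋂₀ 𝒞

/-- The union of `W` with all of the bounded connected components of its complement. -/
def boundedComplementaryFill (W : Set Plane) : Set Plane :=
  W ∪ ⋃₀ {K | (∃ x ∈ Wᶜ, K = connectedComponentIn Wᶜ x) ∧ Bornology.IsBounded K}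

/-- A Bellamy dendroid: a (non-degenerate) smooth plane dendroid whose endpoint
set is connected. -/
def IsBellamyDendroid (K : Set Plane) : Prop :=
  IsDendroid K ∧ K.Nontrivial ∧ (∃ q, DendroidSmoothAt K q) ∧ IsConnected (Endpoints K)

/-- The middle-thirds Cantor set. -/
noncomputable def cantorC : Set ℝ :=
  {x | ∃ a : ℕ → Bool, x = ∑' i, (if a i then (2 : ℝ) else 0) / 3 ^ (i + 1)}

/-!
The images of the rationals under parametrizations of the arcs `αₙ` form a countable set `Q`
meeting every non-degenerate connected subset of every `αₙ`. Interior points of an arc `A ⊆ X`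
are not endpoints of `X`, so the interior of `A` is covered by the closed sets `αₙ`, and by
Baire's theorem one `αₙ` contains a non-degenerate subarc of `A`, which meets `Q`.
By hereditary unicoherence a non-degenerate subcontinuum of `X` contains the arc joining two of
its points, hence meets `Q`; disjoint ones meet `Q` in distinct points.
-/

theorem Set.PairwiseDisjoint.countable_of_inter_nonempty {β : Type*} {𝒦 : Set (Set β)}
    {Q : Set β} (hd : 𝒦.PairwiseDisjoint id) (hQ : Q.Countable)
    (hmeet : ∀ K ∈ 𝒦, (Q ∩ K).Nonempty) : 𝒦.Countable := by
  have : Countable Q := hQ.to_subtype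
  choose c hc using fun K : 𝒦 => hmeet K K.2
  have hinj : Function.Injective fun K : 𝒦 => (⟨c K, (hc K).1⟩ : Q) := fun K L hKL => by
    have hcKL : c K = c L := congrArg Subtype.val hKL
    exact Subtype.ext <| hd.elim K.2 L.2 <| not_disjoint_iff.2 ⟨c K, (hc K).2, hcKL ▸ (hc L).2⟩
  exact countable_coe_iff.1 hinj.countable

section Arc

variable {α : Type*} [TopologicalSpace α]

theorem IsArcWithEndpoints.isCompact {A : Set α} {a b : α} (hA : IsArcWithEndpoints A a b) :
    IsCompact A := by
  obtain ⟨f, hf, -, rfl, -, -⟩ := hA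
  exact isCompact_Icc.image_of_continuousOn hf

theorem IsArcWithEndpoints.isConnected {A : Set α} {a b : α} (hA : IsArcWithEndpoints A a b) :
    IsConnected A := by
  obtain ⟨f, hf, -, rfl, -, -⟩ := hA
  exact (isConnected_Icc zero_le_one).image f hf

theorem IsArc.isCompact {A : Set α} (hA : IsArc A) : IsCompact A :=
  hA.choose_spec.choose_spec.isCompact

variable {f : ℝ → α}

theorem exists_subset_image_Icc_inter_of_image_Ioo_subset_sUnion
    (hf : ContinuousOn f (Icc 0 1)) (hinj : InjOn f (Icc 0 1)) {S : Set (Set α)}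
    (hSc : S.Countable) (hScl : ∀ B ∈ S, IsClosed B) (hcover : f '' Ioo 0 1 ⊆ ⋃₀ S) :
    ∃ B ∈ S, ∃ C ⊆ f '' Icc 0 1 ∩ B, IsPreconnected C ∧ C.Nontrivial := by
  have : Countable S := hSc.to_subtype
  -- `none` stands for the complement of `Ioo 0 1`, so that Baire's theorem applies in `ℝ`.
  let F : Option S → Set ℝ := fun i => i.elim (Ioo 0 1)ᶜ fun B => Icc 0 1 ∩ f ⁻¹' B
  have hFcl : ∀ i, IsClosed (F i) := by
    rintro (_ | ⟨B, hB⟩)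
    · exact isOpen_Ioo.isClosed_compl
    · exact hf.preimage_isClosed_of_isClosed isClosed_Icc (hScl B hB)
  have hFcover : ⋃ i, F i = univ := by
    refine eq_univ_of_forall fun t => ?_
    by_cases ht : t ∈ Ioo 0 1
    · obtain ⟨B, hB, hfB⟩ := hcover (mem_image_of_mem f ht)
      exact mem_iUnion.2 ⟨some ⟨B, hB⟩, Ioo_subset_Icc_self ht, hfB⟩
    · exact mem_iUnion.2 ⟨none, ht⟩
  obtain ⟨t, ht, htF⟩ := (dense_iUnion_interior_of_closed hFcl hFcover).inter_open_nonempty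
    (Ioo 0 1) isOpen_Ioo ⟨1 / 2, by norm_num, by norm_num⟩
  obtain ⟨_ | B, htB⟩ := mem_iUnion.1 htF
  · exact absurd ht (interior_subset htB)
  obtain ⟨c, d, hcd, hsub⟩ := (isOpen_interior.inter isOpen_Ioo).exists_Ioo_subset ⟨t, htB, ht⟩
  have hIcc : Ioo c d ⊆ Icc 0 1 := fun r hr => Ioo_subset_Icc_self (hsub hr).2
  refine ⟨B, B.2, f '' Ioo c d, ?_, isPreconnected_Ioo.image f (hf.mono hIcc),
    (Ioo_infinite hcd).nontrivial.image_of_injOn (hinj.mono hIcc)⟩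
  rintro _ ⟨r, hr, rfl⟩
  exact ⟨mem_image_of_mem f (hIcc hr), (interior_subset (hsub hr).1 : r ∈ F (some B)).2⟩

variable [T2Space α]

theorem isPreconnected_Icc_inter_preimage (hf : ContinuousOn f (Icc 0 1))
    (hinj : InjOn f (Icc 0 1)) {C : Set α} (hC : C ⊆ f '' Icc 0 1) (hCc : IsPreconnected C) :
    IsPreconnected (Icc 0 1 ∩ f ⁻¹' C) := by
  have : CompactSpace (Icc (0 : ℝ) 1) := isCompact_iff_compactSpace.mp isCompact_Icc
  have hemb : IsClosedEmbedding ((Icc 0 1).domRestrict f) :=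
    hf.domRestrict.isClosedEmbedding (injOn_iff_injective.mp hinj)
  have hpre : IsPreconnected ((Icc 0 1).domRestrict f ⁻¹' C) := by
    rwa [← hemb.isInducing.isPreconnected_image,
      image_preimage_eq_of_subset (by rwa [range_domRestrict])]
  rw [← Subtype.image_preimage_coe]
  exact hpre.image _ continuous_subtype_val.continuousOn

theorem image_Icc_subset_of_isPreconnected (hf : ContinuousOn f (Icc 0 1))
    (hinj : InjOn f (Icc 0 1)) {C : Set α} (hC : C ⊆ f '' Icc 0 1) (hCc : IsPreconnected C)
    (h0 : f 0 ∈ C) (h1 : f 1 ∈ C) : f '' Icc 0 1 ⊆ C := by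
  have hT := isPreconnected_Icc_inter_preimage hf hinj hC hCc
  rw [image_subset_iff]
  intro t ht
  exact (hT.Icc_subset (a := 0) (b := 1) ⟨left_mem_Icc.2 zero_le_one, h0⟩
    ⟨right_mem_Icc.2 zero_le_one, h1⟩ ht).2

theorem not_isArcWithEndpoints_of_mem_Ioo (hf : ContinuousOn f (Icc 0 1))
    (hinj : InjOn f (Icc 0 1)) {t : ℝ} (ht : t ∈ Ioo 0 1) (b : α) :
    ¬ IsArcWithEndpoints (f '' Icc 0 1) (f t) b := by
  rintro ⟨g, hg, hginj, hgA, hg0, -⟩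
  -- Removing an end of an arc leaves it connected, but the preimage `Icc 0 1 \ {t}` is not.
  have hcut : IsPreconnected (f '' Icc 0 1 \ {f t}) := by
    have hIoc : g '' Ioc 0 1 = g '' Icc 0 1 \ {g 0} := by
      rw [← Icc_sdiff_left, hginj.image_sdiff,
        inter_eq_right.2 (singleton_subset_iff.2 (left_mem_Icc.2 zero_le_one)), image_singleton]
    rw [← hgA, ← hg0, ← hIoc]
    exact isPreconnected_Ioc.image g (hg.mono Ioc_subset_Icc_self)
  have hmem : ∀ s ∈ Icc (0 : ℝ) 1, s ≠ t → f s ∈ f '' Icc 0 1 \ {f t} := fun s hs hst =>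
    ⟨mem_image_of_mem f hs, fun h => hst (hinj hs (Ioo_subset_Icc_self ht) h)⟩
  have := image_Icc_subset_of_isPreconnected hf hinj sdiff_subset hcut
    (hmem 0 (left_mem_Icc.2 zero_le_one) ht.1.ne) (hmem 1 (right_mem_Icc.2 zero_le_one) ht.2.ne')
  exact (this (mem_image_of_mem f (Ioo_subset_Icc_self ht))).2 rfl

theorem exists_rat_mem_image_inter (hf : ContinuousOn f (Icc 0 1))
    (hinj : InjOn f (Icc 0 1)) {C : Set α} (hC : C ⊆ f '' Icc 0 1) (hCc : IsPreconnected C)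
    (hCnt : C.Nontrivial) : ∃ q : ℚ, (q : ℝ) ∈ Icc 0 1 ∧ f q ∈ C := by
  obtain ⟨x, hx, y, hy, hxy⟩ := hCnt
  obtain ⟨s, hs, rfl⟩ := hC hx
  obtain ⟨t, ht, rfl⟩ := hC hy
  have hst : s ≠ t := fun h => hxy (h ▸ rfl)
  obtain ⟨q, hsq, hqt⟩ := exists_rat_btwn (min_lt_max.2 hst)
  have hT := (isPreconnected_Icc_inter_preimage hf hinj hC hCc).ordConnected
  exact ⟨q, hT.uIcc_subset ⟨hs, hx⟩ ⟨ht, hy⟩ ⟨hsq.le, hqt.le⟩⟩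

theorem IsArc.exists_countable_inter_nonempty {B : Set α} (hB : IsArc B) :
    ∃ D : Set α, D.Countable ∧ D ⊆ B ∧
      ∀ C ⊆ B, IsPreconnected C → C.Nontrivial → (D ∩ C).Nonempty := by
  obtain ⟨-, -, g, hg, hginj, rfl, -, -⟩ := hB
  refine ⟨g '' (Icc 0 1 ∩ range ((↑) : ℚ → ℝ)),
    ((countable_range _).mono inter_subset_right).image g, image_mono inter_subset_left,
    fun C hC hCc hCnt => ?_⟩
  obtain ⟨q, hq, hqC⟩ := exists_rat_mem_image_inter hg hginj hC hCc hCnt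
  exact ⟨g q, mem_image_of_mem g ⟨hq, mem_range_self q⟩, hqC⟩

theorem image_Ioo_subset_diff_endpoints (hf : ContinuousOn f (Icc 0 1))
    (hinj : InjOn f (Icc 0 1)) {X : Set α} (hAX : f '' Icc 0 1 ⊆ X) :
    f '' Ioo 0 1 ⊆ X \ Endpoints X := by
  rintro _ ⟨t, ht, rfl⟩
  have hmem := mem_image_of_mem f (Ioo_subset_Icc_self ht)
  refine ⟨hAX hmem, fun hend => ?_⟩
  obtain ⟨b, hb⟩ := hend.2 _ hAX ⟨f 0, f 1, f, hf, hinj, rfl, rfl, rfl⟩ hmem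
  exact not_isArcWithEndpoints_of_mem_Ioo hf hinj ht b hb

theorem exists_countable_inter_arc_nonempty {X : Set α} {S : Set (Set α)}
    (hSc : S.Countable) (hSarcs : ∀ A ∈ S, IsArc A) (hSunion : X \ Endpoints X = ⋃₀ S) :
    ∃ Q : Set α, Q.Countable ∧ Q ⊆ X ∧ ∀ A ⊆ X, IsArc A → (Q ∩ A).Nonempty := by
  choose! D hDc hDB hD using fun B hB => (hSarcs B hB).exists_countable_inter_nonempty
  refine ⟨⋃ B ∈ S, D B, hSc.biUnion hDc, iUnion₂_subset fun B hB => (hDB B hB).trans ?_, ?_⟩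
  · exact (subset_sUnion_of_mem hB).trans (hSunion ▸ sdiff_subset)
  rintro A hAX ⟨-, -, f, hf, hinj, rfl, -, -⟩
  obtain ⟨B, hB, C, hCA, hCc, hCnt⟩ :=
    exists_subset_image_Icc_inter_of_image_Ioo_subset_sUnion hf hinj hSc
      (fun B hB => (hSarcs B hB).isCompact.isClosed)
      ((image_Ioo_subset_diff_endpoints hf hinj hAX).trans hSunion.subset)
  obtain ⟨x, hxD, hxC⟩ := hD B hB C (hCA.trans inter_subset_right) hCc hCnt
  exact ⟨x, mem_biUnion hB hxD, (hCA hxC).1⟩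

theorem HereditarilyUnicoherent.subset_of_isArcWithEndpoints {X K A : Set α} {x y : α}
    (hX : HereditarilyUnicoherent X) (hKX : K ⊆ X) (hK : IsCompact K) (hKc : IsConnected K)
    (hAX : A ⊆ X) (hA : IsArcWithEndpoints A x y) (hx : x ∈ K) (hy : y ∈ K) : A ⊆ K := by
  have hKA := hX K A hKX hAX hK hKc hA.isCompact hA.isConnected
  obtain ⟨f, hf, hinj, rfl, rfl, rfl⟩ := hA
  exact (image_Icc_subset_of_isPreconnected hf hinj inter_subset_right hKA
    ⟨hx, mem_image_of_mem f (left_mem_Icc.2 zero_le_one)⟩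
    ⟨hy, mem_image_of_mem f (right_mem_Icc.2 zero_le_one)⟩).trans inter_subset_left

theorem isSuslinian_of_countable_inter_arc_nonempty {X Q : Set α}
    (hHU : HereditarilyUnicoherent X) (hArc : ArcwiseConnected X) (hQ : Q.Countable)
    (hQA : ∀ A ⊆ X, IsArc A → (Q ∩ A).Nonempty) : IsSuslinian X := by
  intro 𝒦 h𝒦 hd
  refine hd.countable_of_inter_nonempty hQ fun K hK => ?_
  obtain ⟨hKX, hK, hKc, x, hx, y, hy, hxy⟩ := h𝒦 K hK
  obtain ⟨A, hAX, hA⟩ := hArc x (hKX hx) y (hKX hy) hxy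
  exact (hQA A hAX ⟨x, y, hA⟩).mono <| inter_subset_inter_right _ <|
    hHU.subset_of_isArcWithEndpoints hKX hK hKc hAX hA hx hy

end Arc

/-- Proposition 1, (2) ⇒ (1). -/
theorem stmt_8 {α : Type*} [MetricSpace α] (X : Set α) (hX : IsDendroid X)
    (S : Set (Set α)) (hSc : S.Countable) (hSarcs : ∀ A ∈ S, IsArc A)
    (hSunion : X \ Endpoints X = ⋃₀ S) :
    (∃ Q : Set α, Q.Countable ∧ Q ⊆ X ∧
        ∀ A : Set α, A ⊆ X → IsArc A → (Q ∩ A).Nonempty) ∧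
      IsSuslinian X := by
  obtain ⟨Q, hQc, hQX, hQA⟩ := exists_countable_inter_arc_nonempty hSc hSarcs hSunion
  exact ⟨⟨Q, hQc, hQX, hQA⟩,
    isSuslinian_of_countable_inter_arc_nonempty hX.2.2.1 hX.2.2.2 hQc hQA⟩
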